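/- arXiv:1007.2633 — 2 statements merged into one kernel-verified Lean document; each statement's English description precedes it below -/
import Mathlib

section
/- Let $M,N$ be dual lattices, $K\subset M_{\mathbb{Q}}$, $K^{\vee}\subset N_{\mathbb{Q}}$ dual Gorenstein cones with degree elements $\deg\in M$, $\deg^{\vee}\in N$, and let $\Delta=\{m\in K\cap M: m\cdot\deg^{\vee}=1\}$, $\Delta^{\vee}=\{n\in K^{\vee}\cap N: \deg\cdot n=1\}$. For coefficient functions $f:\Delta\to\mathbb{C}$, $g:\Delta^{\vee}\to\mathbb{C}$, the operator $d^A_{f,g}=\sum_{m\in\Delta}f(m)[m]\otimes(\wedge m)+\sum_{n\in\Delta^{\vee}}g(n)[n]\otimes\mathrm{contr}(n)$ on $\mathbb{C}[(K\oplus K^{\vee})_0]\otimes\Lambda^*(M_{\mathbb{C}})$ satisfies $(d^A_{f,g})^2=0$. -/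
/-!
`d^A_{f,g}` is a linear combination of monomial operators `[a] ⊗ φ`, so over `ℂ` its square is
half the weighted sum of their pairwise anticommutators. On an admissible monomial `[p]` both orders of
two summands `[a] ⊗ φ`, `[b] ⊗ ψ` end on `[p + a + b]`, and the intermediate reduction modulo
`m · n > 0` loses nothing: the pairing is nonnegative on `K × K^∨`, so once the exponent
`p + a + b` pairs to zero, so does every partial sum of `p, a, b`. Hence the anticommutator is
`[p + a + b] ⊗ (ψφ + φψ)`, and `ψφ + φψ` vanishes: wedges anticommute, contractions
anticommute, and `∧m ∘ contr n + contr n ∘ ∧m = m · n`, which is `0` whenever `[p + a + b]`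
survives.
-/

noncomputable section

open scoped Classical

/-- The pairing between the dual lattices `M = N = ℤ^d`. -/
def dotZ {d : ℕ} (m n : Fin d → ℤ) : ℤ := ∑ i, m i * n i

variable {d : ℕ}

/-- The exterior algebra `Λ^*(M_ℂ)`. -/
abbrev Lam (d : ℕ) := ExteriorAlgebra ℂ (Fin d → ℂ)

/-- The ambient module: formal `Λ^*(M_ℂ)`-valued combinations of monomials `[m ⊕ n]`,
`m, n ∈ ℤ^d`.  The semigroup-ring quotient `ℂ[(K ⊕ K^∨)₀] ⊗ Λ^*(M_ℂ)` is realized as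
the subspace supported on pairs `(m, n)` with `m ∈ K`, `n ∈ K^∨`, `m·n = 0`. -/
abbrev Amb (d : ℕ) := ((Fin d → ℤ) × (Fin d → ℤ)) →₀ Lam d

/-- A pair `(m, n)` indexes a nonzero basis monomial of `ℂ[(K ⊕ K^∨)₀]` iff `m ∈ K`,
`n ∈ K^∨` and `m·n = 0`. -/
def Adm (KM KN : AddSubmonoid (Fin d → ℤ)) (p : (Fin d → ℤ) × (Fin d → ℤ)) : Prop :=
  p.1 ∈ KM ∧ p.2 ∈ KN ∧ dotZ p.1 p.2 = 0

/-- Projection onto the span of the admissible monomials (i.e. reduction modulo the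
ideal generated by monomials `[m ⊕ n]` with `m·n > 0`). -/
def projA (KM KN : AddSubmonoid (Fin d → ℤ)) : Amb d →ₗ[ℂ] Amb d :=
  Finsupp.lsum ℂ fun p => if Adm KM KN p then (Finsupp.lsingle p : Lam d →ₗ[ℂ] Amb d) else 0

/-- Multiplication by the monomial `[a.1 ⊕ a.2]` on exponents. -/
def shiftA (a : (Fin d → ℤ) × (Fin d → ℤ)) : Amb d →ₗ[ℂ] Amb d :=
  Finsupp.lmapDomain (Lam d) ℂ (fun p => p + a)

/-- Exterior multiplication by `m ∈ M` on the `Λ^*(M_ℂ)` factor. -/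
def wedgeA (m : Fin d → ℤ) : Amb d →ₗ[ℂ] Amb d :=
  Finsupp.mapRange.linearMap
    (LinearMap.mulLeft ℂ (ExteriorAlgebra.ι ℂ (fun i => (m i : ℂ))))

/-- Contraction by `n ∈ N` (via the duality pairing) on the `Λ^*(M_ℂ)` factor. -/
def contrA (n : Fin d → ℤ) : Amb d →ₗ[ℂ] Amb d :=
  Finsupp.mapRange.linearMap
    (CliffordAlgebra.contractLeft (Q := (0 : QuadraticForm ℂ (Fin d → ℂ)))
      (∑ i, (n i : ℂ) • LinearMap.proj i))

/-- The operator `d^A_{f,g} = ∑_{m ∈ Δ} f(m) [m] ⊗ (∧ m) + ∑_{n ∈ Δ^∨} g(n) [n] ⊗ contr(n)`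
on `ℂ[(K ⊕ K^∨)₀] ⊗ Λ^*(M_ℂ)`. -/
def dA (KM KN : AddSubmonoid (Fin d → ℤ)) (Δ ΔV : Finset (Fin d → ℤ))
    (f g : (Fin d → ℤ) → ℂ) : Amb d →ₗ[ℂ] Amb d :=
  (∑ m ∈ Δ, f m • (projA KM KN ∘ₗ shiftA (m, 0) ∘ₗ wedgeA m)) +
  (∑ n ∈ ΔV, g n • (projA KM KN ∘ₗ shiftA (0, n) ∘ₗ contrA n))

theorem LinearMap.sum_smul_apply_sum_smul_eq_zero {ι K V : Type*} [Field K] [CharZero K]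
    [AddCommGroup V] [Module K V] (s : Finset ι) (c : ι → K) (T : ι → V →ₗ[K] V) (v : V)
    (hanti : ∀ i ∈ s, ∀ j ∈ s, T i (T j v) + T j (T i v) = 0) :
    (∑ i ∈ s, c i • T i) ((∑ i ∈ s, c i • T i) v) = 0 := by
  set S := ∑ i ∈ s, ∑ j ∈ s, (c i * c j) • T j (T i v) with hS
  have hD : (∑ i ∈ s, c i • T i) ((∑ i ∈ s, c i • T i) v) = S := by
    simp only [hS, LinearMap.sum_apply, LinearMap.smul_apply, map_sum,
      map_smul, Finset.smul_sum, smul_smul]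
  have hSS : S + S = 0 := by
    conv_lhs => rhs; rw [hS, Finset.sum_comm]
    rw [hS, ← Finset.sum_add_distrib]
    refine Finset.sum_eq_zero fun i hi => ?_
    rw [← Finset.sum_add_distrib]
    refine Finset.sum_eq_zero fun j hj => ?_
    rw [mul_comm (c j), ← smul_add, hanti j hj i hi, smul_zero]
  rw [hD, ← smul_eq_zero_iff_right (two_ne_zero (α := K)), two_smul]
  exact hSS

theorem Finsupp.map_eq_zero_of_mem_supported {α M N R : Type*} [Semiring R] [AddCommMonoid M]
    [Module R M] [AddCommMonoid N] [Module R N] {s : Set α} (F : (α →₀ M) →ₗ[R] N)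
    (hF : ∀ a ∈ s, ∀ x, F (Finsupp.single a x) = 0) {v : α →₀ M} (hv : v ∈ supported M R s) :
    F v = 0 := by
  rw [← v.sum_single, map_finsuppSum]
  exact Finset.sum_eq_zero fun a ha => hF a ((mem_supported R v).1 hv ha) _

theorem ExteriorAlgebra.ι_mul_contractLeft_add_contractLeft_ι_mul {R M : Type*} [CommRing R]
    [AddCommGroup M] [Module R M] (δ : Module.Dual R M) (m : M) (x : ExteriorAlgebra R M) :
    ExteriorAlgebra.ι R m * CliffordAlgebra.contractLeft δ x +
      CliffordAlgebra.contractLeft δ (ExteriorAlgebra.ι R m * x) = δ m • x := by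
  rw [CliffordAlgebra.contractLeft_ι_mul, add_sub_cancel]

def tensorMonomial (KM KN : AddSubmonoid (Fin d → ℤ)) (a : (Fin d → ℤ) × (Fin d → ℤ))
    (φ : Lam d →ₗ[ℂ] Lam d) : Amb d →ₗ[ℂ] Amb d :=
  projA KM KN ∘ₗ shiftA a ∘ₗ Finsupp.mapRange.linearMap φ

theorem tensorMonomial_single (KM KN : AddSubmonoid (Fin d → ℤ))
    (a p : (Fin d → ℤ) × (Fin d → ℤ)) (φ : Lam d →ₗ[ℂ] Lam d) (x : Lam d) :
    tensorMonomial KM KN a φ (Finsupp.single p x) =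
      if Adm KM KN (p + a) then Finsupp.single (p + a) (φ x) else 0 := by
  simp only [tensorMonomial, projA, shiftA, LinearMap.comp_apply,
    Finsupp.mapRange.linearMap_apply, Finsupp.mapRange_single, Finsupp.lmapDomain_apply,
    Finsupp.mapDomain_single, Finsupp.lsum_single]
  split_ifs <;> rfl

theorem dotZ_eq_dotProduct (m n : Fin d → ℤ) : dotZ m n = m ⬝ᵥ n := rfl

theorem sum_intCast_smul_proj_apply (m n : Fin d → ℤ) :
    (∑ i, (n i : ℂ) • LinearMap.proj (R := ℂ) (φ := fun _ : Fin d => ℂ) i) (fun i => (m i : ℂ)) =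
      (dotZ m n : ℂ) := by
  simp [dotZ, mul_comm]

/-- The generators of `d^A_{f,g}`: `inl m` stands for `[m ⊕ 0] ⊗ (∧ m)` and `inr n` for
`[0 ⊕ n] ⊗ contr(n)`. -/
def genShift : (Fin d → ℤ) ⊕ (Fin d → ℤ) → (Fin d → ℤ) × (Fin d → ℤ) :=
  Sum.elim (fun m => (m, 0)) (fun n => (0, n))

def genOp : (Fin d → ℤ) ⊕ (Fin d → ℤ) → Lam d →ₗ[ℂ] Lam d :=
  Sum.elim (fun m => LinearMap.mulLeft ℂ (ExteriorAlgebra.ι ℂ (fun i => (m i : ℂ))))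
    (fun n => CliffordAlgebra.contractLeft (∑ i, (n i : ℂ) • LinearMap.proj i))

theorem dA_eq_sum_disjSum (KM KN : AddSubmonoid (Fin d → ℤ)) (Δ ΔV : Finset (Fin d → ℤ))
    (f g : (Fin d → ℤ) → ℂ) :
    dA KM KN Δ ΔV f g =
      ∑ i ∈ Δ.disjSum ΔV, Sum.elim f g i • tensorMonomial KM KN (genShift i) (genOp i) := by
  rw [Finset.sum_disjSum]
  rfl

theorem genOp_anticomm (i j : (Fin d → ℤ) ⊕ (Fin d → ℤ))
    (hdot : dotZ (genShift i + genShift j).1 (genShift i + genShift j).2 = 0) (x : Lam d) :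
    genOp i (genOp j x) + genOp j (genOp i x) = 0 := by
  rcases i with m | n <;> rcases j with m' | n'
  · simp only [genOp, Sum.elim_inl, LinearMap.mulLeft_apply]
    rw [← mul_assoc, ← mul_assoc, ← add_mul, ExteriorAlgebra.ι_add_mul_swap, zero_mul]
  · simp only [genShift, Sum.elim_inl, Sum.elim_inr, Prod.fst_add, Prod.snd_add, add_zero,
      zero_add] at hdot
    simp only [genOp, Sum.elim_inl, Sum.elim_inr, LinearMap.mulLeft_apply]
    rw [ExteriorAlgebra.ι_mul_contractLeft_add_contractLeft_ι_mul, sum_intCast_smul_proj_apply, hdot,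
      Int.cast_zero, zero_smul]
  · simp only [genShift, Sum.elim_inl, Sum.elim_inr, Prod.fst_add, Prod.snd_add, add_zero,
      zero_add] at hdot
    simp only [genOp, Sum.elim_inl, Sum.elim_inr, LinearMap.mulLeft_apply]
    rw [add_comm, ExteriorAlgebra.ι_mul_contractLeft_add_contractLeft_ι_mul, sum_intCast_smul_proj_apply,
      hdot, Int.cast_zero, zero_smul]
  · simp only [genOp, Sum.elim_inr]
    rw [CliffordAlgebra.contractLeft_comm, neg_add_cancel]

section Cone

variable {KM KN : AddSubmonoid (Fin d → ℤ)} (hpair : ∀ m ∈ KM, ∀ n ∈ KN, 0 ≤ dotZ m n)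
include hpair

theorem dotZ_eq_zero_of_dotZ_add_eq_zero {p q : (Fin d → ℤ) × (Fin d → ℤ)}
    (hp : p ∈ KM.prod KN) (hq : q ∈ KM.prod KN) (h : dotZ (p + q).1 (p + q).2 = 0) :
    dotZ p.1 p.2 = 0 := by
  rw [AddSubmonoid.mem_prod] at hp hq
  have := hpair _ hp.1 _ hp.2
  have := hpair _ hp.1 _ hq.2
  have := hpair _ hq.1 _ hp.2
  have := hpair _ hq.1 _ hq.2
  simp only [dotZ_eq_dotProduct, Prod.fst_add, Prod.snd_add, add_dotProduct,
    dotProduct_add] at *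
  omega

theorem adm_of_adm_add {p q r : (Fin d → ℤ) × (Fin d → ℤ)} (hp : p ∈ KM.prod KN)
    (hq : q ∈ KM.prod KN) (hr : r ∈ KM.prod KN) (h : Adm KM KN (p + q + r)) :
    Adm KM KN (p + q) := by
  have hpq := add_mem hp hq
  exact ⟨(AddSubmonoid.mem_prod.1 hpq).1, (AddSubmonoid.mem_prod.1 hpq).2,
    dotZ_eq_zero_of_dotZ_add_eq_zero hpair hpq hr h.2.2⟩

theorem tensorMonomial_tensorMonomial_single {p a b : (Fin d → ℤ) × (Fin d → ℤ)}
    (hp : p ∈ KM.prod KN) (ha : a ∈ KM.prod KN) (hb : b ∈ KM.prod KN)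
    (φ ψ : Lam d →ₗ[ℂ] Lam d) (x : Lam d) :
    tensorMonomial KM KN b ψ (tensorMonomial KM KN a φ (Finsupp.single p x)) =
      if Adm KM KN (p + a + b) then Finsupp.single (p + a + b) (ψ (φ x)) else 0 := by
  rw [tensorMonomial_single]
  by_cases hpa : Adm KM KN (p + a)
  · rw [if_pos hpa, tensorMonomial_single]
  · rw [if_neg hpa, map_zero, if_neg fun h => hpa (adm_of_adm_add hpair hp ha hb h)]

theorem tensorMonomial_anticomm_single {p a b : (Fin d → ℤ) × (Fin d → ℤ)}
    (hp : p ∈ KM.prod KN) (ha : a ∈ KM.prod KN) (hb : b ∈ KM.prod KN)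
    {φ ψ : Lam d →ₗ[ℂ] Lam d} {x : Lam d} (h : Adm KM KN (p + a + b) → ψ (φ x) + φ (ψ x) = 0) :
    tensorMonomial KM KN b ψ (tensorMonomial KM KN a φ (Finsupp.single p x)) +
      tensorMonomial KM KN a φ (tensorMonomial KM KN b ψ (Finsupp.single p x)) = 0 := by
  rw [tensorMonomial_tensorMonomial_single hpair hp ha hb,
    tensorMonomial_tensorMonomial_single hpair hp hb ha, add_right_comm p b a]
  split_ifs with hadm
  · rw [← Finsupp.single_add, h hadm, Finsupp.single_zero]
  · rw [add_zero]

theorem tensorMonomial_gen_anticomm_single {i j : (Fin d → ℤ) ⊕ (Fin d → ℤ)}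
    (hi : genShift i ∈ KM.prod KN) (hj : genShift j ∈ KM.prod KN)
    {p : (Fin d → ℤ) × (Fin d → ℤ)} (hp : p ∈ KM.prod KN) (x : Lam d) :
    tensorMonomial KM KN (genShift i) (genOp i)
        (tensorMonomial KM KN (genShift j) (genOp j) (Finsupp.single p x)) +
      tensorMonomial KM KN (genShift j) (genOp j)
        (tensorMonomial KM KN (genShift i) (genOp i) (Finsupp.single p x)) = 0 := by
  refine tensorMonomial_anticomm_single hpair hp hj hi fun hadm => genOp_anticomm i j ?_ x
  refine dotZ_eq_zero_of_dotZ_add_eq_zero hpair (add_mem hi hj) hp ?_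
  rw [add_comm (genShift i), add_comm _ p, ← add_assoc]
  exact hadm.2.2

end Cone

theorem stmt10_general (KM KN : AddSubmonoid (Fin d → ℤ))
    (hdualN : ∀ n, n ∈ KN ↔ ∀ m ∈ KM, 0 ≤ dotZ m n)
    (deg degV : Fin d → ℤ)
    (Δ ΔV : Finset (Fin d → ℤ))
    (hΔ : ∀ m, m ∈ Δ ↔ (m ∈ KM ∧ dotZ m degV = 1))
    (hΔV : ∀ n, n ∈ ΔV ↔ (n ∈ KN ∧ dotZ deg n = 1))
    (f g : (Fin d → ℤ) → ℂ) :
    ∀ v ∈ Finsupp.supported (Lam d) ℂ {p | Adm KM KN p},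
      dA KM KN Δ ΔV f g (dA KM KN Δ ΔV f g v) = 0 := by
  intro v hv
  have hpair : ∀ m ∈ KM, ∀ n ∈ KN, 0 ≤ dotZ m n := fun m hm n hn => (hdualN n).1 hn m hm
  have hgen : ∀ i ∈ Δ.disjSum ΔV, genShift i ∈ KM.prod KN := by
    rintro (m | n) hi
    · exact AddSubmonoid.mem_prod.2 ⟨((hΔ m).1 (Finset.inl_mem_disjSum.1 hi)).1, zero_mem KN⟩
    · exact AddSubmonoid.mem_prod.2 ⟨zero_mem KM, ((hΔV n).1 (Finset.inr_mem_disjSum.1 hi)).1⟩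
  rw [dA_eq_sum_disjSum]
  refine LinearMap.sum_smul_apply_sum_smul_eq_zero _ _ _ _ fun i hi j hj => ?_
  set T := fun k => tensorMonomial KM KN (genShift k) (genOp k)
  refine Finsupp.map_eq_zero_of_mem_supported (T i ∘ₗ T j + T j ∘ₗ T i) (fun p hp x => ?_) hv
  exact tensorMonomial_gen_anticomm_single hpair (hgen i hi) (hgen j hj)
    (AddSubmonoid.mem_prod.2 ⟨hp.1, hp.2.1⟩) x

/-- for dual Gorenstein cones `K ⊂ M_ℚ`, `K^∨ ⊂ N_ℚ` (lattice points `K_M`,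
`K_N`, each the dual of the other) with degree elements `deg ∈ K_M`, `deg^∨ ∈ K_N`, and
`Δ`, `Δ^∨` the degree-one lattice points, the operator `d^A_{f,g}` on
`ℂ[(K ⊕ K^∨)₀] ⊗ Λ^*(M_ℂ)` squares to zero. -/
theorem stmt10 (KM KN : AddSubmonoid (Fin d → ℤ))
    (hdualN : ∀ n, n ∈ KN ↔ ∀ m ∈ KM, 0 ≤ dotZ m n)
    (hdualM : ∀ m, m ∈ KM ↔ ∀ n ∈ KN, 0 ≤ dotZ m n)
    (deg degV : Fin d → ℤ) (hdeg : deg ∈ KM) (hdegV : degV ∈ KN)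
    (Δ ΔV : Finset (Fin d → ℤ))
    (hΔ : ∀ m, m ∈ Δ ↔ (m ∈ KM ∧ dotZ m degV = 1))
    (hΔV : ∀ n, n ∈ ΔV ↔ (n ∈ KN ∧ dotZ deg n = 1))
    (f g : (Fin d → ℤ) → ℂ) :
    ∀ v ∈ Finsupp.supported (Lam d) ℂ {p | Adm KM KN p},
      dA KM KN Δ ΔV f g (dA KM KN Δ ΔV f g v) = 0 :=
  stmt10_general KM KN hdualN deg degV Δ ΔV hΔ hΔV f g

end
end

section
/- In the setting of the complex $(\mathbb{C}[(K\oplus K^{\vee})_0]\otimes\Lambda^*(M_{\mathbb{C}}),\, d^A_{f,g})$, the conformal grading assigning to $[m\oplus n]\otimes P$ (with $P$ homogeneous in $\Lambda^*(M_{\mathbb{C}})$) the degree $-m\cdot\deg^{\vee}+\deg\cdot n+\deg(P)-\deg\cdot\deg^{\vee}$ is preserved by $d^A_{f,g}$, while the grading $m\cdot\deg^{\vee}+\deg\cdot n$ is increased by exactly $1$ by $d^A_{f,g}$. -/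
noncomputable section

open scoped Classical

variable {d : ℕ}

/-- The `k`-th graded piece `Λ^k(M_ℂ)`. -/
def LamPiece (d k : ℕ) : Submodule ℂ (Lam d) :=
  LinearMap.range (ExteriorAlgebra.ι ℂ : (Fin d → ℂ) →ₗ[ℂ] Lam d) ^ k

/-- The conformal-degree-`c` subspace: spanned by `[m ⊕ n] ⊗ P` with `P` of exterior
degree `k` and `−m·deg^∨ + deg·n + k − deg·deg^∨ = c`. -/
def Wconf (deg degV : Fin d → ℤ) (c : ℤ) : Submodule ℂ (Amb d) :=
  ⨆ (p : (Fin d → ℤ) × (Fin d → ℤ)) (k : ℕ)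
    (_ : -dotZ p.1 degV + dotZ deg p.2 + (k : ℤ) - dotZ deg degV = c),
    (LamPiece d k).map (Finsupp.lsingle p)

/-- The cohomological-degree-`c` subspace: spanned by `[m ⊕ n] ⊗ P` with
`m·deg^∨ + deg·n = c`. -/
def Wcoh (deg degV : Fin d → ℤ) (c : ℤ) : Submodule ℂ (Amb d) :=
  Finsupp.supported (Lam d) ℂ {p | dotZ p.1 degV + dotZ deg p.2 = c}

/-! Every summand of `d^A_{f,g}` is a monomial shift composed with a wedge or a contraction,
followed by the projection onto admissible monomials, which only kills terms. Wedging with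
`m ∈ Δ` raises the exterior degree by one and, since `m·deg^∨ = 1`, lowers `-m·deg^∨` by one;
contracting with `n ∈ Δ^∨` lowers the exterior degree by one and, since `deg·n = 1`, raises
`deg·n` by one. Both kinds of summand raise `m·deg^∨ + deg·n` by exactly one. -/

@[simp]
lemma dotZ_add_left (a b n : Fin d → ℤ) : dotZ (a + b) n = dotZ a n + dotZ b n := by
  simp [dotZ, add_mul, Finset.sum_add_distrib]

@[simp]
lemma dotZ_add_right (m a b : Fin d → ℤ) : dotZ m (a + b) = dotZ m a + dotZ m b := by
  simp [dotZ, mul_add, Finset.sum_add_distrib]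

@[simp]
lemma dotZ_zero_left (n : Fin d → ℤ) : dotZ 0 n = 0 := by simp [dotZ]

@[simp]
lemma dotZ_zero_right (m : Fin d → ℤ) : dotZ m 0 = 0 := by simp [dotZ]

namespace ExteriorAlgebra

variable {R M : Type*} [CommRing R] [AddCommGroup M] [Module R M]

lemma ι_mul_mem_exteriorPower (m : M) {k : ℕ} {x : ExteriorAlgebra R M}
    (hx : x ∈ ⋀[R]^k M) : ι R m * x ∈ ⋀[R]^(k + 1) M := by
  rw [exteriorPower, pow_succ']
  exact Submodule.mul_mem_mul ⟨m, rfl⟩ hx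

lemma contractLeft_eq_zero_of_mem_exteriorPower_zero (φ : Module.Dual R M)
    {x : ExteriorAlgebra R M} (hx : x ∈ ⋀[R]^0 M) :
    CliffordAlgebra.contractLeft (Q := 0) φ x = 0 := by
  rw [exteriorPower, pow_zero] at hx
  obtain ⟨r, rfl⟩ := Submodule.mem_one.mp hx
  exact CliffordAlgebra.contractLeft_algebraMap 0 φ r

lemma contractLeft_mem_exteriorPower (φ : Module.Dual R M) :
    ∀ {k : ℕ} {x : ExteriorAlgebra R M}, x ∈ ⋀[R]^(k + 1) M →
      CliffordAlgebra.contractLeft (Q := 0) φ x ∈ ⋀[R]^k M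
  | 0, x, hx => by
    rw [exteriorPower, pow_one] at hx
    obtain ⟨m, rfl⟩ := hx
    rw [CliffordAlgebra.contractLeft_ι, exteriorPower, pow_zero]
    exact Submodule.mem_one.mpr ⟨φ m, rfl⟩
  | k + 1, x, hx => by
    rw [exteriorPower, pow_succ'] at hx
    induction hx using Submodule.mul_induction_on' with
    | mem_mul_mem a ha y hy =>
      obtain ⟨m, rfl⟩ := ha
      rw [CliffordAlgebra.contractLeft_ι_mul]
      exact Submodule.sub_mem _ (Submodule.smul_mem _ _ hy)
        (ι_mul_mem_exteriorPower m (contractLeft_mem_exteriorPower φ hy))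
    | add a _ b _ ha hb => simpa only [map_add] using Submodule.add_mem _ ha hb

end ExteriorAlgebra

open ExteriorAlgebra

section Operators

variable (KM KN : AddSubmonoid (Fin d → ℤ)) (p : (Fin d → ℤ) × (Fin d → ℤ)) (v : Lam d)

@[simp]
lemma wedgeA_single (m : Fin d → ℤ) :
    wedgeA m (Finsupp.single p v) =
      Finsupp.single p (ExteriorAlgebra.ι ℂ (fun i => (m i : ℂ)) * v) := by
  simp [wedgeA]

@[simp]
lemma contrA_single (n : Fin d → ℤ) :
    contrA n (Finsupp.single p v) =
      Finsupp.single p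
        (CliffordAlgebra.contractLeft (Q := (0 : QuadraticForm ℂ (Fin d → ℂ)))
          (∑ i, (n i : ℂ) • LinearMap.proj i) v) := by
  simp [contrA]

@[simp]
lemma shiftA_single (a : (Fin d → ℤ) × (Fin d → ℤ)) :
    shiftA a (Finsupp.single p v) = Finsupp.single (p + a) v := by
  simp [shiftA]

lemma projA_single :
    projA KM KN (Finsupp.single p v) = if Adm KM KN p then Finsupp.single p v else 0 := by
  rw [projA, Finsupp.lsum_single]
  split_ifs <;> simp

variable {KM KN p v}

lemma projA_single_mem {W : Submodule ℂ (Amb d)}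
    (h : Adm KM KN p → Finsupp.single p v ∈ W) : projA KM KN (Finsupp.single p v) ∈ W := by
  rw [projA_single]
  split_ifs with hp
  exacts [h hp, W.zero_mem]

lemma dA_apply_mem {Δ ΔV : Finset (Fin d → ℤ)} (f g : (Fin d → ℤ) → ℂ) {x : Amb d}
    {W : Submodule ℂ (Amb d)}
    (hΔ : ∀ m ∈ Δ, projA KM KN (shiftA (m, 0) (wedgeA m x)) ∈ W)
    (hΔV : ∀ n ∈ ΔV, projA KM KN (shiftA (0, n) (contrA n x)) ∈ W) :
    dA KM KN Δ ΔV f g x ∈ W := by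
  rw [dA, LinearMap.add_apply, LinearMap.sum_apply, LinearMap.sum_apply]
  refine W.add_mem (W.sum_mem fun m hm => ?_) (W.sum_mem fun n hn => ?_)
  · simpa using W.smul_mem (f m) (hΔ m hm)
  · simpa using W.smul_mem (g n) (hΔV n hn)

end Operators

section Gradings

variable {deg degV : Fin d → ℤ}

lemma single_mem_wconf {c : ℤ} (p : (Fin d → ℤ) × (Fin d → ℤ)) {k : ℕ} {v : Lam d}
    (hv : v ∈ LamPiece d k) (h : -dotZ p.1 degV + dotZ deg p.2 + (k : ℤ) - dotZ deg degV = c) :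
    Finsupp.single p v ∈ Wconf deg degV c :=
  Submodule.mem_iSup_of_mem p <| Submodule.mem_iSup_of_mem k <|
    Submodule.mem_iSup_of_mem h ⟨v, hv, rfl⟩

lemma map_wconf_le {T : Amb d →ₗ[ℂ] Amb d} {W : Submodule ℂ (Amb d)} {c : ℤ}
    (h : ∀ p (k : ℕ) v, v ∈ LamPiece d k →
      -dotZ p.1 degV + dotZ deg p.2 + (k : ℤ) - dotZ deg degV = c → T (Finsupp.single p v) ∈ W) :
    (Wconf deg degV c).map T ≤ W := by
  simp only [Wconf, Submodule.map_iSup, iSup_le_iff, Submodule.map_le_iff_le_comap]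
  exact fun p k hc v hv => h p k v hv hc

lemma map_wcoh_le {T : Amb d →ₗ[ℂ] Amb d} {W : Submodule ℂ (Amb d)} {c : ℤ}
    (h : ∀ p v, dotZ p.1 degV + dotZ deg p.2 = c → T (Finsupp.single p v) ∈ W) :
    (Wcoh deg degV c).map T ≤ W := by
  rintro _ ⟨x, hx, rfl⟩
  rw [← Finsupp.sum_single x, Finsupp.sum, map_sum]
  exact W.sum_mem fun p hp => h p (x p) (hx hp)

variable {KM KN : AddSubmonoid (Fin d → ℤ)} {Δ ΔV : Finset (Fin d → ℤ)}
  (hΔ : ∀ m ∈ Δ, dotZ m degV = 1) (hΔV : ∀ n ∈ ΔV, dotZ deg n = 1) (f g : (Fin d → ℤ) → ℂ)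
include hΔ hΔV

lemma map_dA_wconf_le (c : ℤ) :
    (Wconf deg degV c).map (dA KM KN Δ ΔV f g) ≤ Wconf deg degV c := by
  refine map_wconf_le fun p k v hv hc => dA_apply_mem f g (fun m hm => ?_) (fun n hn => ?_)
  · rw [wedgeA_single, shiftA_single]
    refine projA_single_mem fun _ => single_mem_wconf _ (ι_mul_mem_exteriorPower _ hv) ?_
    simp only [Prod.fst_add, Prod.snd_add, dotZ_add_left, dotZ_add_right, dotZ_zero_right,
      hΔ m hm]
    push_cast
    linarith
  · rw [contrA_single, shiftA_single]
    cases k with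
    | zero => simp [contractLeft_eq_zero_of_mem_exteriorPower_zero _ hv]
    | succ k =>
      refine projA_single_mem fun _ =>
        single_mem_wconf _ (contractLeft_mem_exteriorPower _ hv) ?_
      simp only [Prod.fst_add, Prod.snd_add, dotZ_add_left, dotZ_add_right, dotZ_zero_left,
        hΔV n hn]
      push_cast at hc
      linarith

lemma map_dA_wcoh_le (c : ℤ) :
    (Wcoh deg degV c).map (dA KM KN Δ ΔV f g) ≤ Wcoh deg degV (c + 1) := by
  refine map_wcoh_le fun p v hc => dA_apply_mem f g (fun m hm => ?_) (fun n hn => ?_)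
  · rw [wedgeA_single, shiftA_single]
    refine projA_single_mem fun _ => Finsupp.single_mem_supported ℂ _ ?_
    simp only [Set.mem_ofPred_eq, Prod.fst_add, Prod.snd_add, dotZ_add_left, dotZ_add_right,
      dotZ_zero_right, hΔ m hm]
    linarith
  · rw [contrA_single, shiftA_single]
    refine projA_single_mem fun _ => Finsupp.single_mem_supported ℂ _ ?_
    simp only [Set.mem_ofPred_eq, Prod.fst_add, Prod.snd_add, dotZ_add_left, dotZ_add_right,
      dotZ_zero_left, hΔV n hn]
    linarith

end Gradings

theorem stmt11_general (KM KN : AddSubmonoid (Fin d → ℤ))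
    (deg degV : Fin d → ℤ)
    (Δ ΔV : Finset (Fin d → ℤ))
    (hΔ : ∀ m, m ∈ Δ ↔ (m ∈ KM ∧ dotZ m degV = 1))
    (hΔV : ∀ n, n ∈ ΔV ↔ (n ∈ KN ∧ dotZ deg n = 1))
    (f g : (Fin d → ℤ) → ℂ) :
    (∀ c : ℤ, Submodule.map (dA KM KN Δ ΔV f g) (Wconf deg degV c) ≤ Wconf deg degV c) ∧
    (∀ c : ℤ, Submodule.map (dA KM KN Δ ΔV f g) (Wcoh deg degV c) ≤ Wcoh deg degV (c + 1)) := by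
  have hΔ₁ : ∀ m ∈ Δ, dotZ m degV = 1 := fun m hm => ((hΔ m).1 hm).2
  have hΔV₁ : ∀ n ∈ ΔV, dotZ deg n = 1 := fun n hn => ((hΔV n).1 hn).2
  exact ⟨map_dA_wconf_le hΔ₁ hΔV₁ f g, map_dA_wcoh_le hΔ₁ hΔV₁ f g⟩

/-- on `(ℂ[(K ⊕ K^∨)₀] ⊗ Λ^*(M_ℂ), d^A_{f,g})`, the conformal grading
assigning to `[m ⊕ n] ⊗ P` the degree `−m·deg^∨ + deg·n + deg(P) − deg·deg^∨` is
preserved by `d^A_{f,g}`, while the grading `m·deg^∨ + deg·n` is increased by exactly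
`1` by `d^A_{f,g}`. -/
theorem stmt11 (KM KN : AddSubmonoid (Fin d → ℤ))
    (hdualN : ∀ n, n ∈ KN ↔ ∀ m ∈ KM, 0 ≤ dotZ m n)
    (hdualM : ∀ m, m ∈ KM ↔ ∀ n ∈ KN, 0 ≤ dotZ m n)
    (deg degV : Fin d → ℤ) (hdeg : deg ∈ KM) (hdegV : degV ∈ KN)
    (Δ ΔV : Finset (Fin d → ℤ))
    (hΔ : ∀ m, m ∈ Δ ↔ (m ∈ KM ∧ dotZ m degV = 1))
    (hΔV : ∀ n, n ∈ ΔV ↔ (n ∈ KN ∧ dotZ deg n = 1))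
    (f g : (Fin d → ℤ) → ℂ) :
    (∀ c : ℤ, Submodule.map (dA KM KN Δ ΔV f g) (Wconf deg degV c) ≤ Wconf deg degV c) ∧
    (∀ c : ℤ, Submodule.map (dA KM KN Δ ΔV f g) (Wcoh deg degV c) ≤ Wcoh deg degV (c + 1)) :=
  stmt11_general KM KN deg degV Δ ΔV hΔ hΔV f g
end
end
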